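/- Let μ be a probability measure on [0,1] with μ([0,x]) ≤ C·x^β for all x ∈ (0,1], where C > 0 and β > 0. Then there is a constant C' > 0 (depending only on C and β) such that for all n ≥ 2, J(n,μ) ≤ C'·(log n / n)^(2β). -/

import Mathlib

/-!
Let `Q` be the Chebyshev polynomial `T_m` precomposed with the affine map sending `[z, 1]` onto
`[-1, 1]`. Since `T_m (cosh t) = cosh (m t)`, `Q` increases from `1` to `Q 0 ≥ e^{m√z} / 2` on
`[0, z]` and is bounded by `1` in absolute value on `[z, 1]`. Hence `(Q / Q 0)²` is admissible for
`J(2m, μ)`, is at most `1` on `[0, z]` and at most `4 e^{-2m√z}` on `(z, 1]`, which gives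
`J(n, μ) ≤ μ [0, z] + 4 e^{-2m√z}` for `2m ≤ n`. With `m = ⌊n / 2⌋` and
`√z = (8β + 4) log n / n` the first term is `O((log n / n)^{2β})` by the decay hypothesis and the
second is at most `n^{-4β} ≤ (log n / n)^{2β}`; when `√z ≥ 1`, already `J ≤ 1 ≤ z^β` suffices.
-/

open MeasureTheory

/-- `J(n,μ)` : infimum of `∫₀¹ p dμ` over polynomials `p` of degree at most `n`
with `p(0) = 1` and `p ≥ 0` on `[0,1]`. -/
noncomputable def J (n : ℕ) (μ : Measure ℝ) : ℝ :=
  sInf {r : ℝ | ∃ p : Polynomial ℝ, p.natDegree ≤ n ∧ p.eval 0 = 1 ∧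
    (∀ x ∈ Set.Icc (0 : ℝ) 1, 0 ≤ p.eval x) ∧
    r = ∫ x in Set.Icc (0 : ℝ) 1, p.eval x ∂μ}

open Polynomial Polynomial.Chebyshev Real Set

lemma J_le_setIntegral {n : ℕ} (μ : Measure ℝ) {p : ℝ[X]} (hdeg : p.natDegree ≤ n)
    (h0 : p.eval 0 = 1) (hnonneg : ∀ x ∈ Icc (0 : ℝ) 1, 0 ≤ p.eval x) :
    J n μ ≤ ∫ x in Icc (0 : ℝ) 1, p.eval x ∂μ := by
  refine csInf_le ⟨0, ?_⟩ ⟨p, hdeg, h0, hnonneg, rfl⟩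
  rintro r ⟨q, -, -, hq, rfl⟩
  exact setIntegral_nonneg measurableSet_Icc hq

lemma J_le_one (n : ℕ) (μ : Measure ℝ) [IsProbabilityMeasure μ] : J n μ ≤ 1 := by
  refine (J_le_setIntegral μ (p := 1) (by simp) (by simp) (by simp)).trans ?_
  simp

lemma setIntegral_Icc_le_of_le_one_of_le {μ : Measure ℝ} [IsProbabilityMeasure μ]
    {f : ℝ → ℝ} (hf : Continuous f) {z ε : ℝ} (hz0 : 0 ≤ z) (hz1 : z ≤ 1) (hε : 0 ≤ ε)
    (hle_one : ∀ x ∈ Icc 0 z, f x ≤ 1) (hle : ∀ x ∈ Ioc z 1, f x ≤ ε) :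
    ∫ x in Icc (0 : ℝ) 1, f x ∂μ ≤ (μ (Icc 0 z)).toReal + ε := by
  have hdisj : Disjoint (Icc 0 z) (Ioc z 1) :=
    disjoint_left.2 fun x hx hx' => hx'.1.not_ge hx.2
  rw [← Icc_union_Ioc_eq_Icc hz0 hz1, setIntegral_union hdisj measurableSet_Ioc
    hf.integrableOn_Icc hf.integrableOn_Ioc]
  have h1 : ∫ x in Icc 0 z, f x ∂μ ≤ (μ (Icc 0 z)).toReal := by
    simpa [measureReal_def] using
      setIntegral_mono_on hf.integrableOn_Icc (integrableOn_const (C := 1)) measurableSet_Icc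
        hle_one
  have h2 : ∫ x in Ioc z 1, f x ∂μ ≤ ε :=
    calc ∫ x in Ioc z 1, f x ∂μ ≤ ∫ x in Ioc z 1, ε ∂μ :=
          setIntegral_mono_on hf.integrableOn_Ioc integrableOn_const measurableSet_Ioc hle
      _ = μ.real (Ioc z 1) * ε := by rw [setIntegral_const, smul_eq_mul]
      _ ≤ ε := mul_le_of_le_one_left hε measureReal_le_one
  linarith

lemma monotoneOn_eval_T_real (m : ℤ) : MonotoneOn (T ℝ m).eval (Ici 1) := by
  intro x hx y hy hxy
  dsimp only
  rw [← cosh_arcosh hx, ← cosh_arcosh hy, T_real_cosh, T_real_cosh, cosh_le_cosh, abs_mul,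
    abs_mul, abs_of_nonneg (arcosh_nonneg hx), abs_of_nonneg (arcosh_nonneg hy)]
  gcongr
  exact (arcosh_le_arcosh (by linarith [mem_Ici.1 hx]) (by linarith [mem_Ici.1 hy])).2 hxy

lemma cosh_sqrt_le {z : ℝ} (hz0 : 0 ≤ z) (hz1 : z < 1) :
    cosh (√z) ≤ (1 + z) / (1 - z) :=
  calc cosh (√z) ≤ exp (z / 2) := by simpa [sq_sqrt hz0] using cosh_le_exp_half_sq (√z)
    _ ≤ (2 + z / 2) / (2 - z / 2) := exp_le_two_add_div_two_sub (by positivity) (by linarith)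
    _ ≤ (1 + z) / (1 - z) := by
      rw [div_le_div_iff₀ (by linarith) (by linarith)]
      nlinarith

/-- `T_m` precomposed with the affine map `x ↦ (1 + z - 2x) / (1 - z)`, which sends `[z, 1]` onto
`[-1, 1]` and `[0, z]` onto `[1, (1 + z) / (1 - z)]`. -/
noncomputable def shiftedT (m : ℕ) (z : ℝ) : ℝ[X] :=
  (T ℝ m).comp (C (-2 / (1 - z)) * X + C ((1 + z) / (1 - z)))

section shiftedT

variable (m : ℕ) {z : ℝ}

lemma eval_shiftedT (x : ℝ) :
    (shiftedT m z).eval x = (T ℝ m).eval ((1 + z - 2 * x) / (1 - z)) := by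
  simp only [shiftedT, eval_comp, eval_add, eval_mul, eval_C, eval_X]
  ring_nf

lemma natDegree_shiftedT_le : (shiftedT m z).natDegree ≤ m := by
  refine natDegree_comp_le.trans ?_
  rw [natDegree_T, Int.natAbs_natCast]
  exact (Nat.mul_le_mul_left m natDegree_linear_le).trans_eq (mul_one m)

lemma exp_le_two_mul_eval_shiftedT_zero (hz0 : 0 ≤ z) (hz1 : z < 1) :
    exp (m * √z) ≤ 2 * (shiftedT m z).eval 0 := by
  have h : cosh (m * √z) ≤ (shiftedT m z).eval 0 := by
    have hT := T_real_cosh (√z) m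
    push_cast at hT
    have hle : cosh (√z) ≤ (1 + z - 2 * 0) / (1 - z) := by simpa using cosh_sqrt_le hz0 hz1
    rw [eval_shiftedT, ← hT]
    exact monotoneOn_eval_T_real m (one_le_cosh _) ((one_le_cosh _).trans hle) hle
  rw [cosh_eq] at h
  linarith [exp_pos (-(m * √z))]

lemma eval_shiftedT_mem_Icc {x : ℝ} (hz1 : z < 1) (hx : x ∈ Icc 0 z) :
    (shiftedT m z).eval x ∈ Icc 1 ((shiftedT m z).eval 0) := by
  have h1z : 0 < 1 - z := by linarith
  have hy : 1 ≤ (1 + z - 2 * x) / (1 - z) := by rw [le_div_iff₀ h1z]; linarith [hx.2]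
  have hy0 : (1 + z - 2 * x) / (1 - z) ≤ (1 + z - 2 * 0) / (1 - z) := by
    gcongr
    linarith [hx.1]
  rw [eval_shiftedT, eval_shiftedT]
  exact ⟨one_le_eval_T_real _ hy, monotoneOn_eval_T_real _ hy (hy.trans hy0) hy0⟩

lemma abs_eval_shiftedT_le_one {x : ℝ} (hz1 : z < 1) (hx : x ∈ Ioc z 1) :
    |(shiftedT m z).eval x| ≤ 1 := by
  have h1z : 0 < 1 - z := by linarith
  rw [eval_shiftedT]
  refine abs_eval_T_real_le_one _ (abs_le.2 ⟨?_, ?_⟩)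
  · rw [le_div_iff₀ h1z]; linarith [hx.2]
  · rw [div_le_one h1z]; linarith [hx.1]

end shiftedT

lemma J_le_measure_add_exp (μ : Measure ℝ) [IsProbabilityMeasure μ] {z : ℝ} (hz0 : 0 < z)
    (hz1 : z < 1) {n m : ℕ} (hm : 2 * m ≤ n) :
    J n μ ≤ (μ (Icc 0 z)).toReal + 4 * exp (-(2 * m) * √z) := by
  set Q := shiftedT m z
  have hQ0 : exp (m * √z) ≤ 2 * Q.eval 0 := exp_le_two_mul_eval_shiftedT_zero m hz0.le hz1
  have hQ0_pos : 0 < Q.eval 0 := by linarith [exp_pos (m * √z)]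
  set p := (C (Q.eval 0)⁻¹ * Q) ^ 2
  have hp (x : ℝ) : p.eval x = (Q.eval x / Q.eval 0) ^ 2 := by simp [p, div_eq_inv_mul]
  have hdeg : p.natDegree ≤ n := by
    have hQ : (C (Q.eval 0)⁻¹ * Q).natDegree ≤ m :=
      (natDegree_C_mul_le _ _).trans (natDegree_shiftedT_le m)
    exact natDegree_pow_le.trans (by omega)
  have hle_one : ∀ x ∈ Icc 0 z, p.eval x ≤ 1 := fun x hx => by
    obtain ⟨h1, h2⟩ := eval_shiftedT_mem_Icc m hz1 hx
    rw [hp, sq_le_one_iff₀ (div_nonneg (by linarith) hQ0_pos.le)]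
    exact div_le_one_of_le₀ h2 hQ0_pos.le
  have hle_exp : ∀ x ∈ Ioc z 1, p.eval x ≤ 4 * exp (-(2 * m) * √z) := fun x hx =>
    calc p.eval x ≤ (1 / Q.eval 0) ^ 2 := by
          rw [hp, ← sq_abs, abs_div, abs_of_pos hQ0_pos]
          gcongr
          exact abs_eval_shiftedT_le_one m hz1 hx
      _ ≤ (2 / exp (m * √z)) ^ 2 := by
          gcongr ?_ ^ 2
          rwa [div_le_div_iff₀ hQ0_pos (exp_pos _), one_mul]
      _ = 4 * exp (-(2 * m) * √z) := by
          rw [div_pow, ← exp_nat_mul, div_eq_mul_inv, ← exp_neg]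
          push_cast
          ring_nf
  calc J n μ ≤ ∫ x in Icc (0 : ℝ) 1, p.eval x ∂μ :=
        J_le_setIntegral μ hdeg (by simp [hp, hQ0_pos.ne']) fun x _ => by rw [hp]; positivity
    _ ≤ (μ (Icc 0 z)).toReal + 4 * exp (-(2 * m) * √z) :=
        setIntegral_Icc_le_of_le_one_of_le p.continuous hz0.le hz1.le (by positivity)
          hle_one hle_exp
lemma inv_sq_le_log_div_self {x : ℝ} (hx : 2 ≤ x) : (x ^ 2)⁻¹ ≤ log x / x := by
  have hx0 : 0 < x := by linarith
  have h : x⁻¹ ≤ log x := by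
    have := one_sub_inv_le_log_of_pos hx0
    have : x⁻¹ ≤ 2⁻¹ := inv_anti₀ two_pos hx
    linarith
  rw [pow_two, mul_inv, ← div_eq_inv_mul]
  exact div_le_div_of_nonneg_right h hx0.le

lemma four_mul_exp_neg_le_rpow {x β : ℝ} (hx : 2 ≤ x) (hβ : 0 ≤ β) :
    4 * exp (-(4 * β + 2) * log x) ≤ (log x / x) ^ (2 * β) := by
  have hx0 : 0 < x := by linarith
  have hinv : (x ^ 2)⁻¹ = exp (-(2 * log x)) := by
    rw [exp_neg, ← log_rpow hx0, exp_log (by positivity), rpow_two]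
  have hsplit : exp (-(4 * β + 2) * log x) = (x ^ 2)⁻¹ * ((x ^ 2)⁻¹) ^ (2 * β) := by
    rw [hinv, ← exp_mul, ← exp_add]
    ring_nf
  have hfour : 4 * (x ^ 2)⁻¹ ≤ 1 := by
    rw [← div_eq_mul_inv, div_le_one (by positivity)]
    nlinarith
  rw [hsplit, ← mul_assoc]
  calc 4 * (x ^ 2)⁻¹ * ((x ^ 2)⁻¹) ^ (2 * β) ≤ 1 * (log x / x) ^ (2 * β) := by
        gcongr
        exact inv_sq_le_log_div_self hx
    _ = (log x / x) ^ (2 * β) := one_mul _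

lemma four_mul_exp_le_log_div_rpow {n : ℕ} (hn : 2 ≤ n) {β : ℝ} (hβ : 0 ≤ β) :
    4 * exp (-(2 * (n / 2 : ℕ)) * ((8 * β + 4) * (log n / n))) ≤ (log n / n) ^ (2 * β) := by
  have hn2 : (2 : ℝ) ≤ n := by exact_mod_cast hn
  refine le_trans ?_ (four_mul_exp_neg_le_rpow hn2 hβ)
  have hm : (n : ℝ) ≤ 4 * (n / 2 : ℕ) := by exact_mod_cast (by omega : n ≤ 4 * (n / 2))
  set a := (8 * β + 4) * (log n / n)
  have ha : 0 ≤ a := by have := log_nonneg (by linarith : (1 : ℝ) ≤ n); positivity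
  have hna : (n : ℝ) * a = (8 * β + 4) * log n := by simp only [a]; field_simp
  gcongr 4 * exp ?_
  nlinarith [mul_le_mul_of_nonneg_right hm ha]

lemma J_le_rpow_add_exp {μ : Measure ℝ} [IsProbabilityMeasure μ] {C β : ℝ}
    (hdecay : ∀ x ∈ Ioc (0 : ℝ) 1, (μ (Icc 0 x)).toReal ≤ C * x ^ β) {a : ℝ} (ha0 : 0 < a)
    (ha1 : a < 1) {n m : ℕ} (hm : 2 * m ≤ n) :
    J n μ ≤ C * a ^ (2 * β) + 4 * exp (-(2 * m) * a) := by
  have hmeas : (μ (Icc 0 (a ^ 2))).toReal ≤ C * a ^ (2 * β) :=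
    calc (μ (Icc 0 (a ^ 2))).toReal ≤ C * (a ^ 2) ^ β := hdecay _ ⟨by positivity, by nlinarith⟩
      _ = C * a ^ (2 * β) := by rw [← rpow_natCast, ← rpow_mul ha0.le, Nat.cast_ofNat]
  have h := J_le_measure_add_exp μ (pow_pos ha0 2) (by nlinarith) hm
  rw [sqrt_sq ha0.le] at h
  linarith

theorem J_le_of_power_decay_general (μ : Measure ℝ) [IsProbabilityMeasure μ]
    (C β : ℝ) (hC : 0 < C) (hβ : 0 < β)
    (hdecay : ∀ x ∈ Set.Ioc (0 : ℝ) 1, (μ (Set.Icc 0 x)).toReal ≤ C * x ^ β) :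
    ∃ C' > 0, ∀ n : ℕ, 2 ≤ n →
      J n μ ≤ C' * (Real.log n / n) ^ (2 * β) := by
  set K := 8 * β + 4
  refine ⟨(C + 1) * K ^ (2 * β) + 1, by positivity, fun n hn => ?_⟩
  have hL : 0 < log n / n :=
    (inv_pos.2 (by positivity)).trans_le (inv_sq_le_log_div_self (by exact_mod_cast hn))
  have hLβ : 0 ≤ (log n / n) ^ (2 * β) := by positivity
  have hKβ : 0 ≤ K ^ (2 * β) := by positivity
  set a := K * (log n / n)
  have haL : a ^ (2 * β) = K ^ (2 * β) * (log n / n) ^ (2 * β) := mul_rpow (by positivity) hL.le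
  rcases le_or_gt 1 a with ha | ha
  · calc J n μ ≤ 1 := J_le_one n μ
      _ ≤ a ^ (2 * β) := one_le_rpow ha (by positivity)
      _ ≤ ((C + 1) * K ^ (2 * β) + 1) * (log n / n) ^ (2 * β) := by
        rw [haL]; nlinarith [mul_nonneg hC.le (mul_nonneg hKβ hLβ)]
  · calc J n μ ≤ C * a ^ (2 * β) + 4 * exp (-(2 * (n / 2 : ℕ)) * a) :=
          J_le_rpow_add_exp hdecay (by positivity) ha (Nat.mul_div_le n 2)
      _ ≤ C * a ^ (2 * β) + (log n / n) ^ (2 * β) := by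
          gcongr; exact four_mul_exp_le_log_div_rpow hn hβ.le
      _ ≤ ((C + 1) * K ^ (2 * β) + 1) * (log n / n) ^ (2 * β) := by
          rw [haL]; nlinarith [mul_nonneg hKβ hLβ]

/-- Polynomial power law decay of `μ` near `0` gives `J(n,μ) ≤ C'(log n / n)^(2β)`. -/
theorem J_le_of_power_decay (μ : Measure ℝ) [IsProbabilityMeasure μ]
    (hμ : μ (Set.Icc (0 : ℝ) 1)ᶜ = 0)
    (C β : ℝ) (hC : 0 < C) (hβ : 0 < β)
    (hdecay : ∀ x ∈ Set.Ioc (0 : ℝ) 1, (μ (Set.Icc 0 x)).toReal ≤ C * x ^ β) :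
    ∃ C' > 0, ∀ n : ℕ, 2 ≤ n →
      J n μ ≤ C' * (Real.log n / n) ^ (2 * β) :=
  J_le_of_power_decay_general μ C β hC hβ hdecay
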